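/- Fix α > 0. Then ϑ_{α,λ} tends to 0 as λ tends to −1/2 from the right: lim_{λ → (−1/2)^+} ϑ_{α,λ} = 0. -/

import Mathlib

/-- The constant `ϑ_{α,λ}`. -/
noncomputable def vartheta (a lam : ℝ) : ℝ :=
  (1 / (4 * Real.pi)) * Real.exp (a + 1) * a ^ (-(1 : ℝ)/2 - a) *
    (1 + 2*lam) ^ (-(1 : ℝ)/2 - 2*lam) * (1 + 1 / (1620 * (1 + lam)^5)) *
    ((1 + lam) * (1 / Real.sinh (1/(1 + 2*lam))) / (1 + 2*lam)) ^ ((1 : ℝ)/2 + lam) *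
    (a * Real.sinh (1/a)) ^ (-(a/2)) *
    ((1 + lam) * Real.sinh (1/(1 + lam))) ^ ((1 + lam)/2)

/-!
Only the λ-dependent part of `ϑ_{α,λ}` matters, and in it `(1 + 2λ)^{-1/2-2λ} → 0^{1/2} = 0`.
The csch factor is a number in `[0, 1]` raised to a nonnegative power, because `s sinh (1/s) > 1`
for `s > 0`, so it stays bounded; the remaining factors are continuous at `λ = -1/2`.
-/

open Real Filter Topology Set

lemma one_lt_mul_sinh_one_div {s : ℝ} (hs : 0 < s) : 1 < s * sinh (1 / s) := by
  have h := mul_lt_mul_of_pos_left (self_lt_sinh_iff.2 (one_div_pos.2 hs)) hs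
  rwa [mul_one_div_cancel hs.ne'] at h

lemma csch_factor_mem_Icc {lam : ℝ} (hlo : -1/2 < lam) (hhi : lam ≤ 0) :
    (1 + lam) * (1 / sinh (1 / (1 + 2*lam))) / (1 + 2*lam) ∈ Icc 0 1 := by
  have hs : 0 < 1 + 2*lam := by linarith
  have hsinh : 0 < sinh (1 / (1 + 2*lam)) := sinh_pos_iff.2 (one_div_pos.2 hs)
  refine ⟨div_nonneg (mul_nonneg (by linarith) (one_div_nonneg.2 hsinh.le)) hs.le, ?_⟩
  rw [div_le_one hs, mul_one_div, div_le_iff₀ hsinh]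
  nlinarith [one_lt_mul_sinh_one_div hs]

lemma isBoundedUnder_csch_factor_rpow :
    IsBoundedUnder (· ≤ ·) (𝓝[>] (-(1:ℝ)/2)) fun lam : ℝ =>
      ‖((1 + lam) * (1 / sinh (1 / (1 + 2*lam))) / (1 + 2*lam)) ^ ((1:ℝ)/2 + lam)‖ := by
  refine isBoundedUnder_of_eventually_le (a := 1) ?_
  filter_upwards [Ioo_mem_nhdsGT (show -(1:ℝ)/2 < 0 by norm_num)] with lam ⟨hlo, hhi⟩
  obtain ⟨h0, h1⟩ := csch_factor_mem_Icc hlo hhi.le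
  rw [norm_of_nonneg (rpow_nonneg h0 _)]
  exact rpow_le_one h0 h1 (by linarith)

lemma tendsto_one_add_two_mul_rpow :
    Tendsto (fun lam : ℝ => (1 + 2*lam) ^ (-(1:ℝ)/2 - 2*lam)) (𝓝[>] (-(1:ℝ)/2)) (𝓝 0) := by
  have hbase : Tendsto (fun lam : ℝ => 1 + 2*lam) (𝓝 (-(1:ℝ)/2)) (𝓝 0) :=
    (show Continuous fun lam : ℝ => 1 + 2*lam by fun_prop).tendsto' _ _ (by norm_num)
  have hexp : Tendsto (fun lam : ℝ => -(1:ℝ)/2 - 2*lam) (𝓝 (-(1:ℝ)/2)) (𝓝 (1/2)) :=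
    (show Continuous fun lam : ℝ => -(1:ℝ)/2 - 2*lam by fun_prop).tendsto' _ _ (by norm_num)
  simpa using (hbase.rpow hexp (Or.inr one_half_pos)).mono_left nhdsWithin_le_nhds

lemma tendsto_vartheta_lam_factor :
    Tendsto (fun lam : ℝ =>
      (1 + 2*lam) ^ (-(1:ℝ)/2 - 2*lam) *
        ((1 + 1 / (1620 * (1 + lam)^5)) * ((1 + lam) * sinh (1 / (1 + lam))) ^ ((1 + lam)/2)) *
        ((1 + lam) * (1 / sinh (1 / (1 + 2*lam))) / (1 + 2*lam)) ^ ((1:ℝ)/2 + lam))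
      (𝓝[>] (-(1:ℝ)/2)) (𝓝 0) := by
  have hcont : ContinuousAt (fun lam : ℝ =>
      (1 + 1 / (1620 * (1 + lam)^5)) * ((1 + lam) * sinh (1 / (1 + lam))) ^ ((1 + lam)/2))
      (-(1:ℝ)/2) := by
    have hsinh : 0 < sinh (1 / (1 + -(1:ℝ)/2)) := sinh_pos_iff.2 (by norm_num)
    refine ContinuousAt.mul ?_ (ContinuousAt.rpow ?_ (by fun_prop) (Or.inl ?_))
    · exact continuousAt_const.add (continuousAt_const.div (by fun_prop) (by norm_num))
    · exact (continuousAt_id.const_add 1).mul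
        (continuous_sinh.continuousAt.comp (continuousAt_const.div (by fun_prop) (by norm_num)))
    · exact (mul_pos (by norm_num) hsinh).ne'
  have hvanish := tendsto_one_add_two_mul_rpow.mul (hcont.tendsto.mono_left nhdsWithin_le_nhds)
  rw [zero_mul] at hvanish
  exact hvanish.zero_mul_isBoundedUnder_le isBoundedUnder_csch_factor_rpow

theorem stmt9_general (α : ℝ) :
    Filter.Tendsto (fun lam : ℝ => vartheta α lam)
      (nhdsWithin (-(1 : ℝ)/2) (Set.Ioi (-(1 : ℝ)/2))) (nhds 0) := by
  have h := tendsto_vartheta_lam_factor.const_mul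
    (1 / (4 * π) * exp (α + 1) * α ^ (-(1:ℝ)/2 - α) * (α * sinh (1/α)) ^ (-(α/2)))
  rw [mul_zero] at h
  refine h.congr fun lam => ?_
  unfold vartheta
  ring

theorem stmt9 (α : ℝ) (hα : 0 < α) :
    Filter.Tendsto (fun lam : ℝ => vartheta α lam)
      (nhdsWithin (-(1 : ℝ)/2) (Set.Ioi (-(1 : ℝ)/2))) (nhds 0) :=
  stmt9_general α
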